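/- arXiv:2508.01703 — 4 statements merged into one kernel-verified Lean document; each statement's English description precedes it below -/
import Mathlib

section
/- Assume μ is the unique Gibbs measure for a strongly uniformly absolutely convergent (SUAC) interaction Ψ on X. If μ satisfies the log-Sobolev inequality with constant D > 0, then μ satisfies the Gaussian Concentration Bound with constant D·(e^{2‖Ψ‖} + 1)/2. -/
open MeasureTheory Real

noncomputable section

/-- The configuration space `X = {-1,+1}^ℤ`, with spins encoded by booleans. -/
abbrev Config : Type := ℤ → Bool

/-- The real value of a spin: `true ↦ +1`, `false ↦ -1`. -/
def spin (b : Bool) : ℝ := if b then 1 else -1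

/-- Spin flipAt at site `i`. -/
def flipAt (i : ℤ) (ω : Config) : Config := fun j => if j = i then !(ω j) else ω j

/-- A function is local if it depends on finitely many coordinates. -/
def IsLocal (F : Config → ℝ) : Prop :=
  ∃ S : Finset ℤ, ∀ ω η : Config, (∀ i ∈ S, ω i = η i) → F ω = F η

/-- The oscillation `δ_k F` at site `k`. -/
def osc (F : Config → ℝ) (k : ℤ) : ℝ :=
  sSup {d : ℝ | ∃ ξ η : Config, (∀ j : ℤ, j ≠ k → ξ j = η j) ∧ d = F ξ - F η}

/-- The total squared oscillation `‖δ(F)‖₂²`. -/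
def oscSq (F : Config → ℝ) : ℝ := ∑' k : ℤ, (osc F k) ^ 2

/-- The Gaussian Concentration Bound with constant `D`. -/
def GCB (μ : Measure Config) (D : ℝ) : Prop :=
  ∀ F : Config → ℝ, IsLocal F → Continuous F →
    (∫ ω, exp (F ω - ∫ η, F η ∂μ) ∂μ) ≤ exp (D * oscSq F)

/-- The entropy functional `Ent_μ(g)`. -/
def entropy (μ : Measure Config) (g : Config → ℝ) : ℝ :=
  (∫ ω, g ω * log (g ω) ∂μ) - (∫ ω, g ω ∂μ) * log (∫ ω, g ω ∂μ)

/-- The log-Sobolev inequality with constant `D`. -/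
def SatisfiesLSI (μ : Measure Config) (D : ℝ) : Prop :=
  ∀ f : Config → ℝ, IsLocal f → Continuous f →
    entropy μ (fun ω => (f ω) ^ 2) ≤ 2 * D * ∫ ω, ∑' i : ℤ, (f ω - f (flipAt i ω)) ^ 2 ∂μ

/-- The Hamiltonian `H^{βK}_Λ(ω) = -β ∑_{{i,j}∩Λ≠∅, i≠j} K(i,j) ω_i ω_j`,
where the sum runs over ordered pairs with `i < j`. -/
def hamiltonian (K : ℤ → ℤ → ℝ) (β : ℝ) (Λ : Finset ℤ) (ω : Config) : ℝ :=
  -β * ∑' p : ℤ × ℤ,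
      (if p.1 < p.2 ∧ (p.1 ∈ Λ ∨ p.2 ∈ Λ) then K p.1 p.2 * spin (ω p.1) * spin (ω p.2) else 0)

/-- The configuration equal to `a` in `Λ` and to `ω` off `Λ`. -/
def concat (Λ : Finset ℤ) (a : Λ → Bool) (ω : Config) : Config :=
  fun j => if h : j ∈ Λ then a ⟨j, h⟩ else ω j

/-- The Gibbs kernel `γ^{βK}_Λ(a | ω)`. -/
def gibbsKernel (K : ℤ → ℤ → ℝ) (β : ℝ) (Λ : Finset ℤ) (a : Λ → Bool) (ω : Config) : ℝ :=
  exp (-(hamiltonian K β Λ (concat Λ a ω))) /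
    ∑ b : Λ → Bool, exp (-(hamiltonian K β Λ (concat Λ b ω)))

/-- The σ-algebra `F_{Λᶜ}` generated by the coordinates outside `Λ`. -/
def outsideAlgebra (Λ : Finset ℤ) : MeasurableSpace Config :=
  MeasurableSpace.comap (fun (ω : Config) (j : {j : ℤ // j ∉ Λ}) => ω j.1) inferInstance

/-- The cylinder event `{σ_Λ = a}`. -/
def cylinderEvent (Λ : Finset ℤ) (a : Λ → Bool) : Set Config :=
  {ω | ∀ i : Λ, ω i.1 = a i}

/-- `μ` is a Gibbs measure for the pair coupling `K` at inverse temperature `β`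
(the DLR equations). -/
def IsGibbs (K : ℤ → ℤ → ℝ) (β : ℝ) (μ : Measure Config) : Prop :=
  IsProbabilityMeasure μ ∧
  ∀ (Λ : Finset ℤ) (a : Λ → Bool) (B : Set Config),
    MeasurableSet[outsideAlgebra Λ] B →
    (μ (cylinderEvent Λ a ∩ B)).toReal = ∫ ω in B, gibbsKernel K β Λ a ω ∂μ

/-- The Dyson pair couplings `K(i,j) = J(|i-j|)` for `i ≠ j`. -/
def dysonK (J : ℕ → ℝ) : ℤ → ℤ → ℝ := fun i j => if i = j then 0 else J (i - j).natAbs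

/-- The critical inverse temperature `β_c(K)`. -/
def betaC (K : ℤ → ℤ → ℝ) : ℝ :=
  sSup {β : ℝ | 0 ≤ β ∧ ∃! μ : Measure Config, IsGibbs K β μ}

/-- The susceptibility `χ(μ) = ∑_{i∈ℤ} ∫ ω₀ ω_i dμ`. -/
def suscept (μ : Measure Config) : ℝ := ∑' i : ℤ, ∫ ω, spin (ω 0) * spin (ω i) ∂μ

/-- `g` depends only on the coordinates in `V`. -/
def dependsOn (V : Finset ℤ) (g : Config → ℝ) : Prop :=
  ∀ ω η : Config, (∀ i ∈ V, ω i = η i) → g ω = g η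

/-- The sup norm `‖g‖_∞`. -/
def supNorm (g : Config → ℝ) : ℝ := ⨆ ω : Config, |g ω|

/-- `∑_{V ∋ i} ‖Ψ_V‖_∞`. -/
def siteNorm (Ψ : Finset ℤ → Config → ℝ) (i : ℤ) : ℝ :=
  ∑' V : Finset ℤ, if i ∈ V then supNorm (Ψ V) else 0

/-- The SUAC norm `‖Ψ‖ = sup_i ∑_{V ∋ i} ‖Ψ_V‖_∞`. -/
def normInt (Ψ : Finset ℤ → Config → ℝ) : ℝ := ⨆ i : ℤ, siteNorm Ψ i

/-- `Ψ` is a strongly uniformly absolutely convergent interaction. -/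
def IsSUAC (Ψ : Finset ℤ → Config → ℝ) : Prop :=
  (∀ V, Continuous (Ψ V)) ∧ (∀ V, dependsOn V (Ψ V)) ∧ Ψ ∅ = 0 ∧
  (∀ i : ℤ, Summable fun V : Finset ℤ => if i ∈ V then supNorm (Ψ V) else 0) ∧
  BddAbove (Set.range (siteNorm Ψ))

/-- The Hamiltonian `H_Λ = ∑_{V∩Λ≠∅} Ψ_V`. -/
def hamInt (Ψ : Finset ℤ → Config → ℝ) (Λ : Finset ℤ) (ω : Config) : ℝ :=
  ∑' V : Finset ℤ, if (V ∩ Λ).Nonempty then Ψ V ω else 0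

/-- The Gibbs kernel associated with the interaction `Ψ`. -/
def gibbsKernelInt (Ψ : Finset ℤ → Config → ℝ) (Λ : Finset ℤ) (a : Λ → Bool) (ω : Config) : ℝ :=
  exp (-(hamInt Ψ Λ (concat Λ a ω))) / ∑ b : Λ → Bool, exp (-(hamInt Ψ Λ (concat Λ b ω)))

/-- `μ` is a Gibbs measure for the interaction `Ψ` (the DLR equations). -/
def IsGibbsInt (Ψ : Finset ℤ → Config → ℝ) (μ : Measure Config) : Prop :=
  IsProbabilityMeasure μ ∧
  ∀ (Λ : Finset ℤ) (a : Λ → Bool) (B : Set Config),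
    MeasurableSet[outsideAlgebra Λ] B →
    (μ (cylinderEvent Λ a ∩ B)).toReal = ∫ ω in B, gibbsKernelInt Ψ Λ a ω ∂μ

/-!
For a local `F` and `0 < t ≤ 1`, apply the log-Sobolev inequality to `exp (t F / 2)`. Since
`(e^{x/2} - e^{y/2})² ≤ ((x - y) / 2)² (e^x + e^y)`, the `i`-th term of the Dirichlet form is at
most `(t δ_i F / 2)² (e^{tF} + e^{tF ∘ flip_i})`. The DLR equations for the single site `{i}`,
whose Hamiltonian is bounded by `‖Ψ‖`, show that flipping a spin changes cylinder probabilities by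
a factor at most `e^{2‖Ψ‖}`, so `E[e^{tF ∘ flip_i}] ≤ e^{2‖Ψ‖} E[e^{tF}]`. Hence
`Ent(e^{tF}) ≤ K t² E[e^{tF}]` with `K = D (e^{2‖Ψ‖} + 1) ‖δF‖₂² / 2`, and Herbst's argument turns
this into `E[e^{F - E F}] ≤ e^K`.
-/

open ProbabilityTheory Set Filter Topology

section Herbst

variable {Ω : Type*} [MeasurableSpace Ω] {μ : Measure Ω} [IsProbabilityMeasure μ] {X : Ω → ℝ}

/- Herbst's argument: the entropy bound says exactly that `t ↦ cgf X μ t / t - K t` is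
antitone on `(0, 1]`, and this function tends to `μ[X]` as `t → 0⁺`. -/
lemma mgf_one_le_exp_of_entropy_le (hX : Icc 0 1 ⊆ interior (integrableExpSet X μ)) {K : ℝ}
    (hent : ∀ t ∈ Ioc (0 : ℝ) 1,
      t * μ[fun ω ↦ X ω * exp (t * X ω)] - mgf X μ t * log (mgf X μ t) ≤ K * t ^ 2 * mgf X μ t) :
    mgf X μ 1 ≤ exp (μ[X] + K) := by
  have hmgf_pos : ∀ t ∈ Icc (0 : ℝ) 1, 0 < mgf X μ t :=
    fun t ht ↦ mgf_pos (interior_subset (s := integrableExpSet X μ) (hX ht))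
  have hcgf : ∀ t ∈ Icc (0 : ℝ) 1,
      HasDerivAt (cgf X μ) (μ[fun ω ↦ X ω * exp (t * X ω)] / mgf X μ t) t :=
    fun t ht ↦ (hasDerivAt_mgf (hX ht)).log (hmgf_pos t ht).ne'
  set g : ℝ → ℝ := fun t ↦ cgf X μ t / t - K * t
  have hg : ∀ t ∈ Ioc (0 : ℝ) 1, HasDerivAt g
      ((μ[fun ω ↦ X ω * exp (t * X ω)] / mgf X μ t * t - cgf X μ t * 1) / t ^ 2 - K * 1) t :=
    fun t ht ↦ ((hcgf t (Ioc_subset_Icc_self ht)).div (hasDerivAt_id t) ht.1.ne').sub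
      ((hasDerivAt_id t).const_mul K)
  have hg_anti : AntitoneOn g (Ioc 0 1) := by
    refine antitoneOn_of_deriv_nonpos (convex_Ioc 0 1)
      (fun t ht ↦ (hg t ht).continuousAt.continuousWithinAt)
      (fun t ht ↦ (hg t (interior_subset ht)).differentiableAt.differentiableWithinAt)
      (fun t ht ↦ ?_)
    have ht := interior_subset ht
    have hm := hmgf_pos t (Ioc_subset_Icc_self ht)
    rw [(hg t ht).deriv, sub_nonpos, div_le_iff₀ (pow_pos ht.1 2), div_mul_eq_mul_div,
      div_sub' hm.ne', div_le_iff₀ hm]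
    simpa only [cgf, mul_comm t, mul_one] using hent t ht
  have hlim : Tendsto g (𝓝[>] 0) (𝓝 μ[X]) := by
    have hslope := (hcgf 0 ⟨le_rfl, zero_le_one⟩).tendsto_slope_zero_right
    simp only [cgf_zero, mgf_zero, zero_add, sub_zero, zero_mul, exp_zero, mul_one, div_one,
      smul_eq_mul, inv_mul_eq_div] at hslope
    have hK : Tendsto (fun t ↦ K * t) (𝓝[>] (0 : ℝ)) (𝓝 0) := by
      simpa using ((continuous_const_mul K).tendsto 0).mono_left nhdsWithin_le_nhds
    simpa using hslope.sub hK
  have hg1 : g 1 ≤ μ[X] := by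
    refine ge_of_tendsto hlim ?_
    filter_upwards [Ioo_mem_nhdsGT zero_lt_one] with t ht
    exact hg_anti ⟨ht.1, ht.2.le⟩ ⟨zero_lt_one, le_rfl⟩ ht.2.le
  calc mgf X μ 1 = exp (cgf X μ 1) := (exp_log (hmgf_pos 1 ⟨zero_le_one, le_rfl⟩)).symm
    _ ≤ exp (μ[X] + K) := exp_le_exp.2 (by simp only [g, div_one, mul_one] at hg1; linarith)

end Herbst

lemma sq_exp_half_sub_exp_half_le (x y : ℝ) :
    (exp (x / 2) - exp (y / 2)) ^ 2 ≤ ((x - y) / 2) ^ 2 * (exp x + exp y) := by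
  wlog hyx : y ≤ x generalizing x y
  · calc (exp (x / 2) - exp (y / 2)) ^ 2 = (exp (y / 2) - exp (x / 2)) ^ 2 := by ring
      _ ≤ ((y - x) / 2) ^ 2 * (exp y + exp x) := this y x (le_of_not_ge hyx)
      _ = ((x - y) / 2) ^ 2 * (exp x + exp y) := by ring
  have hnonneg : 0 ≤ exp (x / 2) - exp (y / 2) := sub_nonneg.2 (exp_le_exp.2 (by linarith))
  have hle : exp (x / 2) - exp (y / 2) ≤ (x - y) / 2 * exp (x / 2) := by
    have hsplit : exp (y / 2) = exp ((y - x) / 2) * exp (x / 2) := by rw [← exp_add]; ring_nf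
    rw [hsplit]
    nlinarith [add_one_le_exp ((y - x) / 2), exp_pos (x / 2)]
  calc (exp (x / 2) - exp (y / 2)) ^ 2 ≤ ((x - y) / 2 * exp (x / 2)) ^ 2 :=
        pow_le_pow_left₀ hnonneg hle 2
    _ = ((x - y) / 2) ^ 2 * exp x := by rw [mul_pow, ← exp_nat_mul]; ring_nf
    _ ≤ ((x - y) / 2) ^ 2 * (exp x + exp y) := by gcongr; linarith [exp_pos y]

lemma integrable_of_continuous {μ : Measure Config} [IsFiniteMeasure μ] {g : Config → ℝ}
    (hg : Continuous g) : Integrable g μ :=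
  hg.integrable_of_hasCompactSupport (HasCompactSupport.of_compactSpace g)

lemma abs_le_supNorm {g : Config → ℝ} (hg : Continuous g) (ω : Config) : |g ω| ≤ supNorm g :=
  le_ciSup (isCompact_range (continuous_abs.comp hg)).bddAbove ω

@[fun_prop]
lemma continuous_flipAt (i : ℤ) : Continuous (flipAt i) := by
  refine continuous_pi fun j ↦ ?_
  by_cases hj : j = i
  · subst hj
    simp only [flipAt, if_true]
    exact (continuous_of_discreteTopology (f := not)).comp (continuous_apply j)
  · simpa [flipAt, hj] using continuous_apply j

lemma continuous_concat {S : Finset ℤ} (a : S → Bool) : Continuous (concat S a) := by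
  refine continuous_pi fun j ↦ ?_
  by_cases h : j ∈ S
  · simpa [concat, h] using continuous_const
  · simpa [concat, h] using continuous_apply j

lemma measurableSet_cylinderEvent (S : Finset ℤ) (a : S → Bool) :
    MeasurableSet (cylinderEvent S a) := by
  have : cylinderEvent S a = ⋂ i : S, (fun ω : Config ↦ ω i) ⁻¹' {a i} := by
    ext; simp [cylinderEvent]
  rw [this]
  exact .iInter fun i ↦ measurable_pi_apply _ (measurableSet_singleton _)

def cylinderPoint (S : Finset ℤ) (a : S → Bool) : Config := concat S a fun _ ↦ true

lemma cylinderPoint_of_mem (S : Finset ℤ) (a : S → Bool) {i : ℤ} (hi : i ∈ S) :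
    cylinderPoint S a i = a ⟨i, hi⟩ := by
  simp [cylinderPoint, concat, hi]

lemma integral_eq_sum_cylinderEvent (μ : Measure Config) [IsFiniteMeasure μ] {S : Finset ℤ}
    {g : Config → ℝ} (hg : dependsOn S g) :
    ∫ ω, g ω ∂μ = ∑ a : S → Bool, μ.real (cylinderEvent S a) * g (cylinderPoint S a) := by
  have hsum : g = fun ω ↦
      ∑ a : S → Bool, (cylinderEvent S a).indicator (fun _ ↦ g (cylinderPoint S a)) ω := by
    funext ω
    rw [Finset.sum_eq_single_of_mem (fun i : S ↦ ω i) (Finset.mem_univ _)]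
    · rw [Set.indicator_of_mem (show ω ∈ cylinderEvent S fun i ↦ ω i from fun _ ↦ rfl)]
      exact hg _ _ fun i hi ↦ (cylinderPoint_of_mem S (fun i : S ↦ ω i) hi).symm
    · exact fun b _ hb ↦ Set.indicator_of_notMem (fun h ↦ hb (funext fun i ↦ (h i).symm)) _
  conv_lhs => rw [hsum]
  rw [integral_finsetSum _ fun a _ ↦
    (integrable_const _).indicator (measurableSet_cylinderEvent S a)]
  simp_rw [integral_indicator_const _ (measurableSet_cylinderEvent S _), smul_eq_mul]

def flipOn (S : Finset ℤ) (i : ℤ) (a : S → Bool) : S → Bool :=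
  fun j ↦ if (j : ℤ) = i then !(a j) else a j

lemma flipOn_involutive (S : Finset ℤ) (i : ℤ) : Function.Involutive (flipOn S i) := by
  intro a; funext j; by_cases h : (j : ℤ) = i <;> simp [flipOn, h]

lemma flipAt_cylinderPoint {S : Finset ℤ} {i : ℤ} (hi : i ∈ S) (a : S → Bool) :
    flipAt i (cylinderPoint S a) = cylinderPoint S (flipOn S i a) := by
  funext j
  by_cases hj : j = i
  · subst hj; simp [flipAt, flipOn, cylinderPoint_of_mem S _ hi]
  · by_cases hjS : j ∈ S <;> simp [flipAt, flipOn, cylinderPoint, concat, hj, hjS]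

lemma hamInt_singleton (Ψ : Finset ℤ → Config → ℝ) (i : ℤ) (ω : Config) :
    hamInt Ψ {i} ω = ∑' V : Finset ℤ, if i ∈ V then Ψ V ω else 0 := by
  unfold hamInt
  congr 1 with V
  by_cases h : i ∈ V <;> simp [h]

section SingleSite

variable {Ψ : Finset ℤ → Config → ℝ}

lemma IsSUAC.norm_siteTerm_le (hΨ : IsSUAC Ψ) (i : ℤ) (V : Finset ℤ) (ω : Config) :
    ‖if i ∈ V then Ψ V ω else 0‖ ≤ if i ∈ V then supNorm (Ψ V) else 0 := by
  split_ifs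
  · exact abs_le_supNorm (hΨ.1 V) ω
  · simp

lemma IsSUAC.abs_hamInt_singleton_le (hΨ : IsSUAC Ψ) (i : ℤ) (ω : Config) :
    |hamInt Ψ {i} ω| ≤ normInt Ψ := by
  rw [hamInt_singleton]
  exact (tsum_of_norm_bounded (hΨ.2.2.2.1 i).hasSum (hΨ.norm_siteTerm_le i · ω)).trans
    (le_ciSup hΨ.2.2.2.2 i)

lemma IsSUAC.continuous_hamInt_singleton (hΨ : IsSUAC Ψ) (i : ℤ) :
    Continuous (hamInt Ψ {i}) := by
  rw [funext (hamInt_singleton Ψ i)]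
  refine continuous_tsum (fun V ↦ ?_) (hΨ.2.2.2.1 i) (hΨ.norm_siteTerm_le i)
  split_ifs
  exacts [hΨ.1 V, continuous_const]

lemma IsSUAC.continuous_gibbsKernelInt_singleton (hΨ : IsSUAC Ψ) (i : ℤ)
    (a : ({i} : Finset ℤ) → Bool) : Continuous (gibbsKernelInt Ψ {i} a) := by
  have hexp : ∀ b : ({i} : Finset ℤ) → Bool,
      Continuous fun ω ↦ exp (-hamInt Ψ {i} (concat {i} b ω)) := fun b ↦
    ((hΨ.continuous_hamInt_singleton i).comp (continuous_concat b)).neg.rexp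
  exact (hexp a).div (continuous_finsetSum _ fun b _ ↦ hexp b) fun ω ↦
    (Finset.sum_pos (fun b _ ↦ exp_pos _) Finset.univ_nonempty).ne'

lemma IsSUAC.gibbsKernelInt_singleton_le (hΨ : IsSUAC Ψ) (i : ℤ)
    (a b : ({i} : Finset ℤ) → Bool) (ω : Config) :
    gibbsKernelInt Ψ {i} a ω ≤ exp (2 * normInt Ψ) * gibbsKernelInt Ψ {i} b ω := by
  have ha := abs_le.1 (hΨ.abs_hamInt_singleton_le i (concat {i} a ω))
  have hb := abs_le.1 (hΨ.abs_hamInt_singleton_le i (concat {i} b ω))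
  rw [gibbsKernelInt, gibbsKernelInt, ← mul_div_assoc, ← exp_add]
  gcongr
  linarith

end SingleSite

section FlipQuasiInvariance

variable {Ψ : Finset ℤ → Config → ℝ} {μ : Measure Config}

def agreeOff {S : Finset ℤ} (i : ℤ) (a : S → Bool) : Set Config :=
  {ω | ∀ j : S, (j : ℤ) ≠ i → ω j = a j}

lemma measurableSet_agreeOff {S : Finset ℤ} (i : ℤ) (a : S → Bool) :
    MeasurableSet[outsideAlgebra {i}] (agreeOff i a) := by
  refine ⟨{x | ∀ j : S, ∀ h : (j : ℤ) ≠ i, x ⟨j, by simpa using h⟩ = a j}, ?_, rfl⟩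
  simp only [Set.ofPred_forall]
  exact .iInter fun j ↦ .iInter fun h ↦ measurable_pi_apply _ (measurableSet_singleton _)

lemma cylinderEvent_singleton_inter_agreeOff {S : Finset ℤ} {i : ℤ} (hi : i ∈ S)
    {a a' : S → Bool} (haa' : ∀ j : S, (j : ℤ) ≠ i → a' j = a j) :
    cylinderEvent {i} (fun _ ↦ a' ⟨i, hi⟩) ∩ agreeOff i a = cylinderEvent S a' := by
  ext ω
  simp only [cylinderEvent, agreeOff, Set.mem_inter_iff, Set.mem_ofPred_eq, Subtype.forall,
    Finset.mem_singleton, forall_eq]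
  constructor
  · rintro ⟨hωi, hω⟩ j hj
    by_cases hji : j = i
    · subst hji; exact hωi
    · rw [hω j hj hji, haa' ⟨j, hj⟩ hji]
  · intro hω
    exact ⟨hω i hi, fun j hj hji ↦ (hω j hj).trans (haa' ⟨j, hj⟩ hji)⟩

lemma IsGibbsInt.measureReal_cylinderEvent_le (hΨ : IsSUAC Ψ) (hμ : IsGibbsInt Ψ μ)
    {S : Finset ℤ} {i : ℤ} (hi : i ∈ S) {a a' : S → Bool}
    (haa' : ∀ j : S, (j : ℤ) ≠ i → a' j = a j) :
    μ.real (cylinderEvent S a') ≤ exp (2 * normInt Ψ) * μ.real (cylinderEvent S a) := by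
  have := hμ.1
  have hdlr : ∀ b : S → Bool, (∀ j : S, (j : ℤ) ≠ i → b j = a j) →
      μ.real (cylinderEvent S b) =
        ∫ ω in agreeOff i a, gibbsKernelInt Ψ {i} (fun _ ↦ b ⟨i, hi⟩) ω ∂μ := fun b hb ↦ by
    rw [← cylinderEvent_singleton_inter_agreeOff hi hb]
    exact hμ.2 _ _ _ (measurableSet_agreeOff i a)
  rw [hdlr a' haa', hdlr a fun _ _ ↦ rfl, ← integral_const_mul]
  have hint : ∀ b, Integrable (gibbsKernelInt Ψ {i} b) μ := fun b ↦
    integrable_of_continuous (hΨ.continuous_gibbsKernelInt_singleton i b)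
  exact integral_mono (hint _).restrict ((hint _).restrict.const_mul _)
    fun ω ↦ hΨ.gibbsKernelInt_singleton_le i _ _ ω

lemma IsGibbsInt.integral_comp_flipAt_le (hΨ : IsSUAC Ψ) (hμ : IsGibbsInt Ψ μ)
    {S : Finset ℤ} {g : Config → ℝ} (hg : dependsOn S g) (hg0 : ∀ ω, 0 ≤ g ω) (i : ℤ) :
    ∫ ω, g (flipAt i ω) ∂μ ≤ exp (2 * normInt Ψ) * ∫ ω, g ω ∂μ := by
  have := hμ.1
  set T := insert i S
  have hi : i ∈ T := Finset.mem_insert_self i S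
  have hgT : dependsOn T g := fun ω η h ↦ hg ω η fun j hj ↦ h j (Finset.mem_insert_of_mem hj)
  have hgflipT : dependsOn T (fun ω ↦ g (flipAt i ω)) := fun ω η h ↦
    hgT _ _ fun j hj ↦ by simp only [flipAt, h j hj]
  set p : (T → Bool) → ℝ := fun a ↦ μ.real (cylinderEvent T a)
  rw [integral_eq_sum_cylinderEvent μ hgflipT, integral_eq_sum_cylinderEvent μ hgT,
    Finset.mul_sum]
  calc ∑ a, p a * g (flipAt i (cylinderPoint T a))
      = ∑ a, p (flipOn T i (flipOn T i a)) * g (cylinderPoint T (flipOn T i a)) := by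
        simp only [flipAt_cylinderPoint hi, flipOn_involutive T i _]
    _ = ∑ a, p (flipOn T i a) * g (cylinderPoint T a) :=
        Equiv.sum_comp ((flipOn_involutive T i).toPerm _)
          fun b ↦ p (flipOn T i b) * g (cylinderPoint T b)
    _ ≤ ∑ a, exp (2 * normInt Ψ) * (p a * g (cylinderPoint T a)) := by
        refine Finset.sum_le_sum fun a _ ↦ ?_
        rw [← mul_assoc]
        exact mul_le_mul_of_nonneg_right
          (hμ.measureReal_cylinderEvent_le hΨ hi fun j hj ↦ if_neg hj) (hg0 _)

end FlipQuasiInvariance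

lemma abs_sub_le_osc {F : Config → ℝ} (hF : Continuous F) {k : ℤ} {ξ η : Config}
    (h : ∀ j, j ≠ k → ξ j = η j) : |F ξ - F η| ≤ osc F k := by
  obtain ⟨M, hM⟩ := (isCompact_range hF).bddAbove
  obtain ⟨m, hm⟩ := (isCompact_range hF).bddBelow
  have hbdd : BddAbove {d : ℝ | ∃ ξ η : Config, (∀ j, j ≠ k → ξ j = η j) ∧ d = F ξ - F η} := by
    refine ⟨M - m, ?_⟩
    rintro d ⟨ξ, η, -, rfl⟩
    linarith [hM ⟨ξ, rfl⟩, hm ⟨η, rfl⟩]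
  rcases abs_cases (F ξ - F η) with ⟨he, -⟩ | ⟨he, -⟩ <;> rw [he]
  · exact le_csSup hbdd ⟨ξ, η, h, rfl⟩
  · exact le_csSup hbdd ⟨η, ξ, fun j hj ↦ (h j hj).symm, by ring⟩

lemma osc_eq_zero_of_notMem {F : Config → ℝ} {S : Finset ℤ} (hF : dependsOn S F) {k : ℤ}
    (hk : k ∉ S) : osc F k = 0 := by
  have : {d : ℝ | ∃ ξ η : Config, (∀ j, j ≠ k → ξ j = η j) ∧ d = F ξ - F η} = {0} := by
    refine Set.eq_singleton_iff_unique_mem.2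
      ⟨⟨fun _ ↦ true, fun _ ↦ true, fun _ _ ↦ rfl, by ring⟩, ?_⟩
    rintro d ⟨ξ, η, hd, rfl⟩
    rw [hF ξ η fun i hi ↦ hd i (ne_of_mem_of_not_mem hi hk), sub_self]
  rw [osc, this, csSup_singleton]

lemma oscSq_eq_sum {F : Config → ℝ} {S : Finset ℤ} (hF : dependsOn S F) :
    oscSq F = ∑ k ∈ S, osc F k ^ 2 :=
  tsum_eq_sum fun k hk ↦ by rw [osc_eq_zero_of_notMem hF hk, sq, mul_zero]

lemma entropy_exp_mul (μ : Measure Config) (F : Config → ℝ) (t : ℝ) :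
    entropy μ (fun ω ↦ exp (t * F ω)) =
      t * μ[fun ω ↦ F ω * exp (t * F ω)] - mgf F μ t * log (mgf F μ t) := by
  simp only [entropy, log_exp, mgf, ← integral_const_mul]
  congr 2 with ω
  ring

lemma IsGibbsInt.integral_tsum_sq_exp_half_sub_le {Ψ : Finset ℤ → Config → ℝ}
    {μ : Measure Config} (hΨ : IsSUAC Ψ) (hμ : IsGibbsInt Ψ μ) {F : Config → ℝ}
    {S : Finset ℤ} (hS : dependsOn S F) (hF : Continuous F) (t : ℝ) :
    ∫ ω, ∑' i, (exp (t * F ω / 2) - exp (t * F (flipAt i ω) / 2)) ^ 2 ∂μ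
      ≤ t ^ 2 / 4 * (1 + exp (2 * normInt Ψ)) * oscSq F * mgf F μ t := by
  have := hμ.1
  have hflip_off : ∀ i ∉ S, ∀ ω, F (flipAt i ω) = F ω := fun i hi ω ↦
    hS _ _ fun j hj ↦ by simp [flipAt, ne_of_mem_of_not_mem hj hi]
  have hterm : ∀ i ω, (exp (t * F ω / 2) - exp (t * F (flipAt i ω) / 2)) ^ 2 ≤
      t ^ 2 / 4 * osc F i ^ 2 * (exp (t * F ω) + exp (t * F (flipAt i ω))) := by
    intro i ω
    set x := F ω
    set y := F (flipAt i ω)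
    have hosc : (x - y) ^ 2 ≤ osc F i ^ 2 :=
      sq_le_sq.2 ((abs_sub_le_osc hF fun j hj ↦ by simp [flipAt, hj]).trans (le_abs_self _))
    calc _ ≤ ((t * x - t * y) / 2) ^ 2 * (exp (t * x) + exp (t * y)) := by
          simpa only [mul_div_assoc] using sq_exp_half_sub_exp_half_le (t * x) (t * y)
      _ = t ^ 2 / 4 * (x - y) ^ 2 * (exp (t * x) + exp (t * y)) := by ring
      _ ≤ _ := by gcongr
  have hflip_int : ∀ i, ∫ ω, exp (t * F (flipAt i ω)) ∂μ ≤ exp (2 * normInt Ψ) * mgf F μ t :=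
    fun i ↦ hμ.integral_comp_flipAt_le hΨ (S := S) (g := fun ω ↦ exp (t * F ω))
      (fun ω η h ↦ by simp only [hS ω η h]) (fun _ ↦ (exp_pos _).le) i
  calc ∫ ω, ∑' i, (exp (t * F ω / 2) - exp (t * F (flipAt i ω) / 2)) ^ 2 ∂μ
      = ∑ i ∈ S, ∫ ω, (exp (t * F ω / 2) - exp (t * F (flipAt i ω) / 2)) ^ 2 ∂μ := by
        rw [← integral_finsetSum _ fun i _ ↦ integrable_of_continuous (by fun_prop)]
        congr 1 with ω
        exact tsum_eq_sum fun i hi ↦ by rw [hflip_off i hi, sub_self, sq, mul_zero]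
    _ ≤ ∑ i ∈ S, t ^ 2 / 4 * osc F i ^ 2 * (mgf F μ t + ∫ ω, exp (t * F (flipAt i ω)) ∂μ) := by
        gcongr with i
        rw [mgf, ← integral_add (integrable_of_continuous (by fun_prop))
          (integrable_of_continuous (by fun_prop)), ← integral_const_mul]
        exact integral_mono (integrable_of_continuous (by fun_prop))
          (integrable_of_continuous (by fun_prop)) (hterm i)
    _ ≤ ∑ i ∈ S, t ^ 2 / 4 * osc F i ^ 2 * ((1 + exp (2 * normInt Ψ)) * mgf F μ t) := by
        gcongr with i
        linarith [hflip_int i]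
    _ = t ^ 2 / 4 * (1 + exp (2 * normInt Ψ)) * oscSq F * mgf F μ t := by
        rw [oscSq_eq_sum hS, Finset.mul_sum, Finset.sum_mul]
        exact Finset.sum_congr rfl fun i _ ↦ by ring

theorem statement6_general (Ψ : Finset ℤ → Config → ℝ) (hΨ : IsSUAC Ψ)
    (μ : Measure Config) (hμ : IsGibbsInt Ψ μ)
    (D : ℝ) (hD : 0 < D) (hLSI : SatisfiesLSI μ D) :
    GCB μ (D * (exp (2 * normInt Ψ) + 1) / 2) := by
  rintro F ⟨S, hS⟩ hF
  have := hμ.1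
  set K := D * (exp (2 * normInt Ψ) + 1) / 2 * oscSq F
  have hent : ∀ t ∈ Ioc (0 : ℝ) 1, t * μ[fun ω ↦ F ω * exp (t * F ω)] -
      mgf F μ t * log (mgf F μ t) ≤ K * t ^ 2 * mgf F μ t := by
    intro t _
    have hsq : (fun ω ↦ exp (t * F ω / 2) ^ 2) = fun ω ↦ exp (t * F ω) :=
      funext fun ω ↦ by rw [← exp_nat_mul]; ring_nf
    have hLSIt :=
      hLSI (fun ω ↦ exp (t * F ω / 2)) ⟨S, fun ω η h ↦ by simp only [hS ω η h]⟩ (by fun_prop)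
    rw [hsq, entropy_exp_mul] at hLSIt
    calc _ ≤ _ := hLSIt
      _ ≤ 2 * D * (t ^ 2 / 4 * (1 + exp (2 * normInt Ψ)) * oscSq F * mgf F μ t) := by
          gcongr
          exact hμ.integral_tsum_sq_exp_half_sub_le hΨ hS hF t
      _ = K * t ^ 2 * mgf F μ t := by ring
  have hmgf : mgf F μ 1 ≤ exp (μ[F] + K) :=
    mgf_one_le_exp_of_entropy_le (fun t _ ↦ by
      simp [integrableExpSet, fun t ↦ integrable_of_continuous (μ := μ) (hF.const_mul t).rexp]) hent
  calc ∫ ω, exp (F ω - ∫ η, F η ∂μ) ∂μ = mgf F μ 1 * exp (-μ[F]) := by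
        simp only [mgf, one_mul, sub_eq_add_neg, exp_add, integral_mul_const]
    _ ≤ exp (μ[F] + K) * exp (-μ[F]) := by gcongr
    _ = exp K := by rw [← exp_add]; ring_nf

/-- If `μ` is the unique Gibbs measure for a SUAC interaction `Ψ` and
satisfies the log-Sobolev inequality with constant `D > 0`, then `μ` satisfies the
Gaussian Concentration Bound with constant `D(e^{2‖Ψ‖}+1)/2`. -/
theorem statement6 (Ψ : Finset ℤ → Config → ℝ) (hΨ : IsSUAC Ψ)
    (μ : Measure Config) (hμ : IsGibbsInt Ψ μ)
    (huniq : ∀ μ' : Measure Config, IsGibbsInt Ψ μ' → μ' = μ)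
    (D : ℝ) (hD : 0 < D) (hLSI : SatisfiesLSI μ D) :
    GCB μ (D * (exp (2 * normInt Ψ) + 1) / 2) :=
  statement6_general Ψ hΨ μ hμ D hD hLSI

end
end

section
/- Let X be a compact metrizable topological space with its Borel σ-algebra, S : X → X a continuous map, (μ_n) a sequence of Borel probability measures on X converging weakly to a Borel probability measure μ, and h_n, h : X → ℝ continuous functions with h_n → h uniformly on X. Suppose that for every n the pushforward μ_n ∘ S^{−1} equals the measure with density h_n with respect to μ_n, i.e. ∫ f∘S dμ_n = ∫ f·h_n dμ_n for every continuous f : X → ℝ. Then μ ∘ S^{−1} equals the measure with density h with respect to μ; in particular μ ∘ S^{−1} is absolutely continuous with respect to μ with Radon–Nikodym density h. -/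
/-!
Testing the density identity against `f` and letting `n → ∞` gives
`∫ f ∘ S dμ = ∫ f h dμ` for every continuous `f`: the left side converges by weak convergence,
and on the right `∫ f hₙ dμₙ` stays within `‖f‖ ‖hₙ - h‖_∞` of `∫ f h dμₙ`, which converges by weak
convergence. Taking `f = -min h 0` shows `h ≥ 0` `μ`-a.e., so `h` is an honest density, and a finite
Borel measure on a metrizable space is determined by its integrals of bounded continuous functions.
-/

open MeasureTheory Filter Topology

section

variable {X : Type*} [MeasurableSpace X]

theorem dist_integral_le_of_forall_dist_le {μ : Measure X} [IsProbabilityMeasure μ]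
    {f g : X → ℝ} (hf : Integrable f μ) (hg : Integrable g μ) {ε : ℝ}
    (hfg : ∀ x, dist (f x) (g x) ≤ ε) : dist (∫ x, f x ∂μ) (∫ x, g x ∂μ) ≤ ε := by
  rw [dist_eq_norm, ← integral_sub hf hg]
  refine (norm_integral_le_of_norm_le_const (μ := μ)
    (Eventually.of_forall fun x => dist_eq_norm (f x) (g x) ▸ hfg x)).trans_eq ?_
  simp

theorem tendsto_integral_of_tendstoUniformly {ι : Type*} {l : Filter ι} {ν : ι → Measure X}
    [∀ i, IsProbabilityMeasure (ν i)] {F : ι → X → ℝ} {f : X → ℝ}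
    (hF : ∀ i, Integrable (F i) (ν i)) (hf : ∀ i, Integrable f (ν i))
    (hunif : TendstoUniformly F f l) {L : ℝ} (hL : Tendsto (fun i => ∫ x, f x ∂ν i) l (𝓝 L)) :
    Tendsto (fun i => ∫ x, F i x ∂ν i) l (𝓝 L) := by
  refine hL.congr_dist (Metric.tendsto_nhds.2 fun ε hε => ?_)
  filter_upwards [Metric.tendstoUniformly_iff.1 hunif (ε / 2) (half_pos hε)] with i hi
  rw [Real.dist_0_eq_abs, abs_of_nonneg dist_nonneg]
  exact (dist_integral_le_of_forall_dist_le (hf i) (hF i) fun x => (hi x).le).trans_lt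
    (half_lt_self hε)

end

section

variable {X : Type*} [TopologicalSpace X] [CompactSpace X]

theorem TendstoUniformly.mul_left_of_compactSpace {ι : Type*} {l : Filter ι} {F : ι → X → ℝ}
    {g : X → ℝ} (hF : ∀ i, Continuous (F i)) (hg : Continuous g) (hFg : TendstoUniformly F g l)
    {f : X → ℝ} (hf : Continuous f) :
    TendstoUniformly (fun i x => f x * F i x) (fun x => f x * g x) l := by
  have hFg' : Tendsto (fun i => ContinuousMap.mk (F i) (hF i)) l (𝓝 ⟨g, hg⟩) :=
    ContinuousMap.tendsto_iff_tendstoUniformly.2 hFg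
  exact ContinuousMap.tendsto_iff_tendstoUniformly.1 ((tendsto_const_nhds (x := ⟨f, hf⟩)).mul hFg')

variable [MeasurableSpace X] [OpensMeasurableSpace X]

theorem Continuous.integrable_of_compactSpace
    {μ : Measure X} [IsFiniteMeasure μ] {f : X → ℝ} (hf : Continuous f) : Integrable f μ :=
  hf.integrable_of_hasCompactSupport (.of_compactSpace f)

theorem ae_nonneg_of_forall_integral_mul_nonneg {μ : Measure X} [IsFiniteMeasure μ] {h : X → ℝ}
    (hh : Continuous h) (H : ∀ f : X → ℝ, Continuous f → 0 ≤ f → 0 ≤ ∫ x, f x * h x ∂μ) :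
    0 ≤ᵐ[μ] h := by
  set m : X → ℝ := fun x => min (h x) 0
  have hm : Continuous m := hh.min continuous_const
  have hmh : ∀ x, -m x * h x = -(m x ^ 2) := fun x => by
    rcases le_total 0 (h x) with hx | hx <;> simp [m, hx, sq]
  have hzero : ∫ x, m x ^ 2 ∂μ = 0 := by
    refine le_antisymm ?_ (integral_nonneg fun x => sq_nonneg _)
    have := H (fun x => -m x) hm.neg fun x => neg_nonneg.2 (min_le_right _ _)
    simp only [hmh, integral_neg] at this
    linarith
  filter_upwards [(integral_eq_zero_iff_of_nonneg (fun x => sq_nonneg _)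
    (hm.pow 2).integrable_of_compactSpace).1 hzero] with x hx
  simpa [m] using hx

theorem map_eq_withDensity_of_forall_integral_comp_eq [HasOuterApproxClosed X] [BorelSpace X]
    {μ : Measure X} [IsFiniteMeasure μ] {S : X → X} (hS : Measurable S) {h : X → ℝ}
    (hh : Continuous h) (H : ∀ f : X → ℝ, Continuous f → ∫ x, f (S x) ∂μ = ∫ x, f x * h x ∂μ) :
    μ.map S = μ.withDensity (fun x => ENNReal.ofReal (h x)) := by
  have hh_nonneg : 0 ≤ᵐ[μ] h := ae_nonneg_of_forall_integral_mul_nonneg hh fun f hf hf0 =>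
    H f hf ▸ integral_nonneg fun x => hf0 (S x)
  have := Measure.isFiniteMeasure_map μ S
  have := isFiniteMeasure_withDensity_ofReal (hh.integrable_of_compactSpace (μ := μ)).2
  refine ext_of_forall_integral_eq_of_IsFiniteMeasure fun f => ?_
  rw [integral_map hS.aemeasurable f.continuous.aestronglyMeasurable, H f f.continuous,
    integral_withDensity_eq_integral_toReal_smul
      hh.measurable.ennreal_ofReal (ae_of_all _ fun x => ENNReal.ofReal_lt_top)]
  refine integral_congr_ae (hh_nonneg.mono fun x hx => ?_)
  simp [ENNReal.toReal_ofReal hx, mul_comm]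

end

/-- On a compact metrizable space, if `μ_n → μ` weakly, `h_n → h`
uniformly, and for each `n` the pushforward `μ_n ∘ S⁻¹` has density `h_n` w.r.t. `μ_n`
(tested against continuous functions), then `μ ∘ S⁻¹` is the measure with density `h`
w.r.t. `μ`; in particular `μ ∘ S⁻¹ ≪ μ` with Radon–Nikodym density `h`. -/
theorem statement9 {X : Type*} [TopologicalSpace X] [CompactSpace X] [TopologicalSpace.MetrizableSpace X]
    [MeasurableSpace X] [BorelSpace X]
    (S : X → X) (hS : Continuous S)
    (μseq : ℕ → Measure X) (μ : Measure X)
    (hprob : ∀ n, IsProbabilityMeasure (μseq n)) (hμprob : IsProbabilityMeasure μ)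
    (hweak : ∀ f : X → ℝ, Continuous f →
      Filter.Tendsto (fun n => ∫ x, f x ∂(μseq n)) Filter.atTop (nhds (∫ x, f x ∂μ)))
    (hseq : ℕ → X → ℝ) (h : X → ℝ)
    (hcont : ∀ n, Continuous (hseq n)) (hhcont : Continuous h)
    (hunif : TendstoUniformly hseq h Filter.atTop)
    (hdens : ∀ n, ∀ f : X → ℝ, Continuous f →
      (∫ x, f (S x) ∂(μseq n)) = ∫ x, f x * hseq n x ∂(μseq n)) :
    μ.map S = μ.withDensity (fun x => ENNReal.ofReal (h x)) ∧ μ.map S ≪ μ := by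
  have hlim : ∀ f : X → ℝ, Continuous f → ∫ x, f (S x) ∂μ = ∫ x, f x * h x ∂μ := by
    intro f hf
    have hrhs : Tendsto (fun n => ∫ x, f x * hseq n x ∂μseq n) atTop (𝓝 (∫ x, f x * h x ∂μ)) :=
      tendsto_integral_of_tendstoUniformly
        (fun n => (hf.mul (hcont n)).integrable_of_compactSpace)
        (fun n => (hf.mul hhcont).integrable_of_compactSpace)
        (hunif.mul_left_of_compactSpace hcont hhcont hf)
        (hweak (fun x => f x * h x) (hf.mul hhcont))
    exact tendsto_nhds_unique (hweak _ (hf.comp hS)) (hrhs.congr fun n => (hdens n f hf).symm)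
  have hmap := map_eq_withDensity_of_forall_integral_comp_eq hS.measurable hhcont hlim
  exact ⟨hmap, hmap ▸ withDensity_absolutelyContinuous μ _⟩
end

section
/- Let (Ω, F, μ) be a probability space, f : Ω → ℝ a bounded measurable function, and C ≥ 0. Assume that for every λ ∈ [0,1], λ·∫ f·e^{λf} dμ − (∫ e^{λf} dμ)·log(∫ e^{λf} dμ) ≤ C·λ²·∫ e^{λf} dμ. Then ∫ exp(f − ∫ f dμ) dμ ≤ e^C. -/
open MeasureTheory ProbabilityTheory Real Filter Set Topology

/-!
Herbst argument. With `Z(λ) = ∫ e^{λf} dμ`, the hypothesis says exactly that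
`u(λ) = log Z(λ) / λ` satisfies `u'(λ) ≤ C`, since `λ² u'(λ) = λ Z'(λ) / Z(λ) - log Z(λ)`.
So `u(λ) - Cλ` is nonincreasing on `(0, 1]`, and it tends to `Z'(0) = ∫ f dμ` as `λ → 0⁺`
because `log Z(0) = 0`; hence `log Z(1) ≤ ∫ f dμ + C`.
-/

theorem le_mul_deriv_add_of_mul_deriv_sub_le {g g' : ℝ → ℝ} {C b : ℝ} (hb : 0 < b)
    (hg : ∀ x ∈ Icc 0 b, HasDerivAt g (g' x) x) (hg0 : g 0 = 0)
    (hle : ∀ x ∈ Ioc 0 b, x * g' x - g x ≤ C * x ^ 2) :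
    g b ≤ b * g' 0 + C * b ^ 2 := by
  set φ : ℝ → ℝ := fun x ↦ g x / x - C * x
  set φ' : ℝ → ℝ := fun x ↦ (g' x * x - g x * 1) / x ^ 2 - C
  have hφ' : ∀ x ∈ Ioc 0 b, HasDerivAt φ (φ' x) x := fun x hx ↦
    ((hg x (Ioc_subset_Icc_self hx)).div (hasDerivAt_id x) hx.1.ne').sub
      (by simpa using (hasDerivAt_id x).const_mul C)
  have hφ_anti : AntitoneOn φ (Ioc 0 b) := by
    refine antitoneOn_of_hasDerivWithinAt_nonpos (f' := φ') (convex_Ioc 0 b)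
      (fun x hx ↦ (hφ' x hx).continuousAt.continuousWithinAt) (fun x hx ↦ ?_) (fun x hx ↦ ?_)
    all_goals rw [interior_Ioc] at hx
    · exact (hφ' x (Ioo_subset_Ioc_self hx)).hasDerivWithinAt
    · rw [sub_nonpos, div_le_iff₀ (by nlinarith [hx.1])]
      linarith [hle x (Ioo_subset_Ioc_self hx)]
  have hφ_lim : Tendsto φ (𝓝[>] 0) (𝓝 (g' 0)) := by
    have hslope := (hg 0 (left_mem_Icc.2 hb.le)).tendsto_slope_zero_right
    simp only [zero_add, hg0, sub_zero, smul_eq_mul] at hslope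
    have hlin : Tendsto (fun x : ℝ ↦ C * x) (𝓝[>] 0) (𝓝 0) := by
      simpa using ((continuous_const_mul C).tendsto 0).mono_left nhdsWithin_le_nhds
    simpa [φ, div_eq_inv_mul] using hslope.sub hlin
  have hφb : g b / b - C * b ≤ g' 0 := by
    refine ge_of_tendsto hφ_lim ?_
    filter_upwards [Ioo_mem_nhdsGT hb] with x hx
    exact hφ_anti ⟨hx.1, hx.2.le⟩ ⟨hb, le_rfl⟩ hx.2.le
  rw [sub_le_iff_le_add, div_le_iff₀ hb] at hφb
  linarith

section Herbst

variable {Ω : Type*} [MeasurableSpace Ω] {μ : Measure Ω} {X : Ω → ℝ}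

lemma hasDerivAt_cgf [NeZero μ] {t : ℝ} (h : t ∈ interior (integrableExpSet X μ)) :
    HasDerivAt (cgf X μ) (μ[fun ω ↦ X ω * exp (t * X ω)] / mgf X μ t) t :=
  (hasDerivAt_mgf h).log
    (mgf_pos' (NeZero.ne μ) (interior_subset (s := integrableExpSet X μ) h)).ne'

theorem cgf_le_of_entropy_le [IsProbabilityMeasure μ] {B C b : ℝ} (hb : 0 < b)
    (hX : AEMeasurable X μ) (hB : ∀ᵐ ω ∂μ, |X ω| ≤ B)
    (hent : ∀ t ∈ Ioc 0 b, t * μ[fun ω ↦ X ω * exp (t * X ω)] - mgf X μ t * cgf X μ t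
      ≤ C * t ^ 2 * mgf X μ t) :
    cgf X μ b ≤ b * μ[X] + C * b ^ 2 := by
  have hint : ∀ t, Integrable (fun ω ↦ exp (t * X ω)) μ := fun _ ↦
    integrable_exp_mul_of_mem_Icc hX (hB.mono fun _ hω ↦ abs_le.1 hω)
  have hint_interior : ∀ t, t ∈ interior (integrableExpSet X μ) := by
    simp [integrableExpSet, hint]
  have hmgf_pos : ∀ t, 0 < mgf X μ t := fun t ↦ mgf_pos (hint t)
  have := le_mul_deriv_add_of_mul_deriv_sub_le (C := C) hb
    (fun t _ ↦ hasDerivAt_cgf (hint_interior t)) cgf_zero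
    fun t ht ↦ by
      rw [mul_div_assoc', div_sub' (hmgf_pos t).ne', div_le_iff₀ (hmgf_pos t)]
      linarith [hent t ht]
  simpa using this

end Herbst

theorem statement11_general {Ω : Type*} [MeasurableSpace Ω] (μ : Measure Ω) [IsProbabilityMeasure μ]
    (f : Ω → ℝ) (hf : Measurable f) (hbdd : ∃ B : ℝ, ∀ x, |f x| ≤ B)
    (C : ℝ)
    (h : ∀ lam ∈ Set.Icc (0 : ℝ) 1,
      lam * (∫ x, f x * Real.exp (lam * f x) ∂μ)
        - (∫ x, Real.exp (lam * f x) ∂μ) * Real.log (∫ x, Real.exp (lam * f x) ∂μ)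
      ≤ C * lam ^ 2 * ∫ x, Real.exp (lam * f x) ∂μ) :
    (∫ x, Real.exp (f x - ∫ y, f y ∂μ) ∂μ) ≤ Real.exp C := by
  obtain ⟨B, hB⟩ := hbdd
  have hcgf : cgf f μ 1 ≤ μ[f] + C := by
    simpa using cgf_le_of_entropy_le one_pos hf.aemeasurable (ae_of_all μ hB) (C := C)
      fun t ht ↦ h t (Ioc_subset_Icc_self ht)
  have hint : Integrable (fun x ↦ exp (1 * f x)) μ :=
    integrable_exp_mul_of_mem_Icc hf.aemeasurable (ae_of_all μ fun x ↦ abs_le.1 (hB x))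
  calc (∫ x, exp (f x - ∫ y, f y ∂μ) ∂μ)
      = mgf f μ 1 * exp (-μ[f]) := by
        simpa [mgf, sub_eq_add_neg] using mgf_add_const (X := f) (μ := μ) (t := 1) (-μ[f])
    _ = exp (cgf f μ 1 - μ[f]) := by rw [← exp_cgf hint, ← exp_add, sub_eq_add_neg]
    _ ≤ exp C := exp_le_exp.2 (by linarith)

/-- **Herbst argument.** If for a bounded measurable `f` on a probability
space one has `λ∫ f e^{λf} dμ - Z(λ) log Z(λ) ≤ C λ² Z(λ)` for every `λ ∈ [0,1]`,
where `Z(λ) = ∫ e^{λf} dμ`, then `∫ exp(f - ∫ f dμ) dμ ≤ e^C`. -/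
theorem statement11 {Ω : Type*} [MeasurableSpace Ω] (μ : Measure Ω) [IsProbabilityMeasure μ]
    (f : Ω → ℝ) (hf : Measurable f) (hbdd : ∃ B : ℝ, ∀ x, |f x| ≤ B)
    (C : ℝ) (hC : 0 ≤ C)
    (h : ∀ lam ∈ Set.Icc (0 : ℝ) 1,
      lam * (∫ x, f x * Real.exp (lam * f x) ∂μ)
        - (∫ x, Real.exp (lam * f x) ∂μ) * Real.log (∫ x, Real.exp (lam * f x) ∂μ)
      ≤ C * lam ^ 2 * ∫ x, Real.exp (lam * f x) ∂μ) :
    (∫ x, Real.exp (f x - ∫ y, f y ∂μ) ∂μ) ≤ Real.exp C :=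
  statement11_general μ f hf hbdd C h
end

section
/- For every real number v ≥ 0, ∑_{m=1}^∞ ((2^m + 2)/m!)·m·v^m·Γ(m/2) ≤ (6v² + 8v)·e^{v²}, where Γ denotes Euler's Gamma function. -/
/-!
Split the series by the parity of `m`. For odd `m = 2k + 1`, Legendre's duplication formula
gives `Γ(k + 1/2) = C(2k, k) k! √π / 4^k`, and the term collapses to
`(2 + 2 / 4^k) √π v (v²)^k / k!`. For even `m = 2k + 2`, `Γ(k + 1) = k!` and the term is
`(4^(k+1) + 2) / ((2k + 1) C(2k, k)) · v² (v²)^k / k!`, whose coefficient is at most `6` because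
`4^k ≤ (2k + 1) C(2k, k)`. Both bounds are multiples of the exponential series of `v²`, and
`√π ≤ 2` finishes the estimate.
-/

open Real Nat

theorem Nat.centralBinom_mul_factorial_sq (n : ℕ) : centralBinom n * n ! ^ 2 = (2 * n)! := by
  have := Nat.choose_mul_factorial_mul_factorial (show n ≤ 2 * n by omega)
  rw [show 2 * n - n = n by omega] at this
  rw [centralBinom_eq_two_mul_choose, ← this]; ring

theorem Nat.four_pow_le_two_mul_add_one_mul_centralBinom (n : ℕ) :
    4 ^ n ≤ (2 * n + 1) * centralBinom n := by
  have h := four_pow_le_two_mul_self_mul_centralBinom (n + 1) n.succ_pos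
  rw [mul_assoc, succ_mul_centralBinom_succ, pow_succ] at h
  linarith

theorem Real.Gamma_nat_add_half_eq_centralBinom (n : ℕ) :
    Gamma (n + 1 / 2) = centralBinom n * n ! * √π / 4 ^ n := by
  have h := Gamma_mul_Gamma_add_half (n + 1 / 2)
  rw [show (n : ℝ) + 1 / 2 + 1 / 2 = n + 1 by ring,
    show 2 * ((n : ℝ) + 1 / 2) = (2 * n : ℕ) + 1 by push_cast; ring,
    show 1 - ((2 * n : ℕ) + 1 : ℝ) = -((2 * n : ℕ) : ℝ) by ring,
    Gamma_nat_eq_factorial, Gamma_nat_eq_factorial, rpow_neg zero_le_two, rpow_natCast, pow_mul,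
    ← Nat.centralBinom_mul_factorial_sq] at h
  refine mul_right_cancel₀ (by positivity : (n ! : ℝ) ≠ 0) (h.trans ?_)
  push_cast
  ring

/-- The term of index `m + 1` of the series. -/
noncomputable def gammaSeriesTerm (v : ℝ) (m : ℕ) : ℝ :=
  (2 ^ (m + 1) + 2 : ℝ) / (m + 1)! * (m + 1) * v ^ (m + 1) * Gamma ((m + 1) / 2)

lemma gammaSeriesTerm_nonneg {v : ℝ} (hv : 0 ≤ v) (m : ℕ) : 0 ≤ gammaSeriesTerm v m := by
  have := Gamma_pos_of_pos (by positivity : (0 : ℝ) < (m + 1) / 2)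
  unfold gammaSeriesTerm
  positivity

lemma gammaSeriesTerm_two_mul (v : ℝ) (k : ℕ) :
    gammaSeriesTerm v (2 * k) = (2 + 2 / 4 ^ k) * √π * v * ((v ^ 2) ^ k / k !) := by
  have hfact : ((2 * k + 1)! : ℝ) = (2 * k + 1) * centralBinom k * k ! ^ 2 := by
    rw [factorial_succ, ← Nat.centralBinom_mul_factorial_sq]; push_cast; ring
  rw [gammaSeriesTerm, hfact, show (((2 * k : ℕ) : ℝ) + 1) / 2 = k + 1 / 2 by push_cast; ring,
    Gamma_nat_add_half_eq_centralBinom]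
  have hC : (centralBinom k : ℝ) ≠ 0 := by exact_mod_cast (centralBinom_pos k).ne'
  field_simp
  rw [pow_succ (2 : ℝ), pow_mul (2 : ℝ), pow_succ v, pow_mul v]
  push_cast
  ring

lemma gammaSeriesTerm_two_mul_add_one (v : ℝ) (k : ℕ) :
    gammaSeriesTerm v (2 * k + 1) =
      (4 ^ (k + 1) + 2) / ((2 * k + 1) * centralBinom k) * v ^ 2 * ((v ^ 2) ^ k / k !) := by
  have hfact : ((2 * k + 1 + 1)! : ℝ) = (2 * k + 2) * (2 * k + 1) * centralBinom k * k ! ^ 2 := by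
    rw [factorial_succ, factorial_succ, ← Nat.centralBinom_mul_factorial_sq]; push_cast; ring
  rw [gammaSeriesTerm, hfact, show (((2 * k + 1 : ℕ) : ℝ) + 1) / 2 = k + 1 by push_cast; ring,
    Gamma_nat_eq_factorial]
  have hC : (centralBinom k : ℝ) ≠ 0 := by exact_mod_cast (centralBinom_pos k).ne'
  field_simp
  rw [show 2 * k + 1 + 1 = 2 * (k + 1) by ring, pow_mul (2 : ℝ), pow_mul v]
  push_cast
  ring

lemma gammaSeriesTerm_two_mul_le {v : ℝ} (hv : 0 ≤ v) (k : ℕ) :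
    gammaSeriesTerm v (2 * k) ≤ 4 * √π * v * ((v ^ 2) ^ k / k !) := by
  have hcoeff : 2 + 2 / (4 : ℝ) ^ k ≤ 4 := by
    have : (2 : ℝ) / 4 ^ k ≤ 2 := div_le_self zero_le_two (one_le_pow₀ (by norm_num))
    linarith
  rw [gammaSeriesTerm_two_mul]
  gcongr

lemma gammaSeriesTerm_two_mul_add_one_le (v : ℝ) (k : ℕ) :
    gammaSeriesTerm v (2 * k + 1) ≤ 6 * v ^ 2 * ((v ^ 2) ^ k / k !) := by
  have hcoeff : ((4 : ℝ) ^ (k + 1) + 2) / ((2 * k + 1) * centralBinom k) ≤ 6 := by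
    have h4 := Nat.four_pow_le_two_mul_add_one_mul_centralBinom k
    have h1 : 0 < (2 * k + 1) * centralBinom k := Nat.mul_pos (2 * k).succ_pos (centralBinom_pos k)
    rw [div_le_iff₀ (by exact_mod_cast h1), pow_succ]
    exact_mod_cast (by omega : 4 ^ k * 4 + 2 ≤ 6 * ((2 * k + 1) * centralBinom k))
  rw [gammaSeriesTerm_two_mul_add_one]
  gcongr

lemma tsum_le_add_of_even_odd_le {f a b : ℕ → ℝ} {A B : ℝ} (hf : ∀ n, 0 ≤ f n)
    (ha : HasSum a A) (hb : HasSum b B) (heven : ∀ k, f (2 * k) ≤ a k)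
    (hodd : ∀ k, f (2 * k + 1) ≤ b k) : ∑' n, f n ≤ A + B := by
  have hfe := Summable.of_nonneg_of_le (fun k ↦ hf _) heven ha.summable
  have hfo := Summable.of_nonneg_of_le (fun k ↦ hf _) hodd hb.summable
  rw [(hfe.hasSum.even_add_odd hfo.hasSum).tsum_eq]
  exact add_le_add (hasSum_le heven hfe.hasSum ha) (hasSum_le hodd hfo.hasSum hb)

/-- For every `v ≥ 0`,
`∑_{m=1}^∞ ((2^m + 2)/m!)·m·v^m·Γ(m/2) ≤ (6v² + 8v)·e^{v²}`. -/
theorem statement14 (v : ℝ) (hv : 0 ≤ v) :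
    (∑' m : ℕ, ((2 ^ (m + 1) + 2 : ℝ) / (Nat.factorial (m + 1) : ℝ)
        * ((m : ℝ) + 1) * v ^ (m + 1) * Real.Gamma (((m : ℝ) + 1) / 2)))
      ≤ (6 * v ^ 2 + 8 * v) * Real.exp (v ^ 2) := by
  have hexp : HasSum (fun k ↦ (v ^ 2) ^ k / k !) (exp (v ^ 2)) := by
    simpa [Real.exp_eq_exp_ℝ] using NormedSpace.expSeries_div_hasSum_exp (v ^ 2)
  have hsqrt : √π ≤ 2 := Real.sqrt_le_iff.mpr ⟨zero_le_two, by linarith [pi_le_four]⟩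
  calc ∑' m, gammaSeriesTerm v m
      ≤ 4 * √π * v * exp (v ^ 2) + 6 * v ^ 2 * exp (v ^ 2) :=
        tsum_le_add_of_even_odd_le (gammaSeriesTerm_nonneg hv) (hexp.mul_left _)
          (hexp.mul_left _) (gammaSeriesTerm_two_mul_le hv) (gammaSeriesTerm_two_mul_add_one_le v)
    _ ≤ (6 * v ^ 2 + 8 * v) * exp (v ^ 2) := by
        nlinarith [mul_nonneg hv (exp_pos (v ^ 2)).le]
end
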